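/- arXiv:1210.2827 — 7 statements merged into one kernel-verified Lean document; each statement's English description precedes it below -/
import Mathlib

section
/- Let A be a commutative ring written as a filtered colimit A = colim A_i of commutative rings. If B is a finitely presented commutative A-algebra, then there exists an index i and a finitely presented commutative A_i-algebra B_i such that B is isomorphic to B_i ⊗_{A_i} A as A-algebras. -/
/-!
Choose a finite presentation `B = R[X₁, …, Xₙ] ⧸ (p₁, …, pₘ)`. Its relations have finitely
many coefficients, and each of them comes from some `A i`; by directedness they all come from a
single `A i`. Lifting the relations to polynomials `qₖ` over `A i`, the algebra
`Bᵢ = A i[X₁, …, Xₙ] ⧸ (q₁, …, qₘ)` is finitely presented, and `R ⊗[A i] Bᵢ` has the presentation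
`R[X₁, …, Xₙ] ⧸ (p₁, …, pₘ)`, i.e. it is `B`.
-/

open TensorProduct

theorem Set.Finite.exists_subset_range_of_directed {ι α : Type*} [Preorder ι]
    [IsDirected ι (· ≤ ·)] [Nonempty ι] {A : ι → Type*} (g : ∀ i, A i → α)
    (hmono : ∀ i j, i ≤ j → Set.range (g i) ⊆ Set.range (g j))
    (hsurj : ∀ x, ∃ i y, g i y = x) {s : Set α} (hs : s.Finite) :
    ∃ i, s ⊆ Set.range (g i) := by
  have hcover : (hs.toFinset : Set α) ⊆ ⋃ i, Set.range (g i) := fun x _ => by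
    obtain ⟨i, y, rfl⟩ := hsurj x
    exact Set.mem_iUnion.mpr ⟨i, y, rfl⟩
  simpa using (Monotone.directed_le fun i j hij => hmono i j hij)
    |>.exists_mem_subset_of_finset_subset_biUnion hcover

theorem Algebra.Presentation.exists_model_of_coeffs_subset_range {R₀ R B : Type u} {ι σ : Type v}
    [CommRing R₀] [CommRing R] [CommRing B] [Algebra R B] [Finite ι] [Finite σ]
    (P : Algebra.Presentation R B ι σ) (φ : R₀ →+* R) (hφ : P.coeffs ⊆ Set.range φ) :
    ∃ (B₀ : Type max u v) (_ : CommRing B₀) (_ : Algebra R₀ B₀),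
      Algebra.FinitePresentation R₀ B₀ ∧
      (letI : Algebra R₀ R := φ.toAlgebra
       Nonempty ((R ⊗[R₀] B₀) ≃ₐ[R] B)) := by
  let : Algebra R₀ R := φ.toAlgebra
  let : Algebra R₀ B := ((algebraMap R B).comp φ).toAlgebra
  have : IsScalarTower R₀ R B := .of_algebraMap_eq' rfl
  have : P.HasCoeffs R₀ := ⟨hφ⟩
  exact ⟨P.ModelOfHasCoeffs R₀, inferInstance, inferInstance, inferInstance,
    ⟨P.tensorModelOfHasCoeffsEquiv R₀⟩⟩

theorem statement0_general
    {ι : Type u} [Preorder ι] [IsDirected ι (· ≤ ·)] [Nonempty ι]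
    (A : ι → Type u) [∀ i, CommRing (A i)]
    (f : ∀ i j, i ≤ j → A i →+* A j)
    (R : Type u) [CommRing R]
    (g : ∀ i, A i →+* R)
    (hg : ∀ i j (hij : i ≤ j), (g j).comp (f i j hij) = g i)
    (hsurj : ∀ x : R, ∃ i y, g i y = x)
    (B : Type u) [CommRing B] [Algebra R B]
    (hB : Algebra.FinitePresentation R B) :
    ∃ (i : ι) (Bi : Type u) (_ : CommRing Bi) (_ : Algebra (A i) Bi),
      Algebra.FinitePresentation (A i) Bi ∧
      (letI : Algebra (A i) R := (g i).toAlgebra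
       Nonempty ((R ⊗[A i] Bi) ≃ₐ[R] B)) := by
  let P := Algebra.Presentation.ofFinitePresentation R B
  have hmono : ∀ i j, i ≤ j → Set.range (g i) ⊆ Set.range (g j) := fun i j hij => by
    rw [← hg i j hij, RingHom.coe_comp]
    exact Set.range_comp_subset_range _ _
  obtain ⟨i, hi⟩ := P.finite_coeffs.exists_subset_range_of_directed (fun i => g i) hmono hsurj
  exact ⟨i, P.exists_model_of_coeffs_subset_range (g i) hi⟩

theorem statement0
    {ι : Type u} [Preorder ι] [IsDirected ι (· ≤ ·)] [Nonempty ι]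
    (A : ι → Type u) [∀ i, CommRing (A i)]
    (f : ∀ i j, i ≤ j → A i →+* A j)
    (hf_id : ∀ i, f i i le_rfl = RingHom.id (A i))
    (hf_comp : ∀ i j k (hij : i ≤ j) (hjk : j ≤ k),
      (f j k hjk).comp (f i j hij) = f i k (le_trans hij hjk))
    (R : Type u) [CommRing R]
    (g : ∀ i, A i →+* R)
    (hg : ∀ i j (hij : i ≤ j), (g j).comp (f i j hij) = g i)
    (hsurj : ∀ x : R, ∃ i y, g i y = x)
    (hexact : ∀ i (x y : A i), g i x = g i y →
      ∃ j, ∃ hij : i ≤ j, f i j hij x = f i j hij y)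
    (B : Type u) [CommRing B] [Algebra R B]
    (hB : Algebra.FinitePresentation R B) :
    ∃ (i : ι) (Bi : Type u) (_ : CommRing Bi) (_ : Algebra (A i) Bi),
      Algebra.FinitePresentation (A i) Bi ∧
      (letI : Algebra (A i) R := (g i).toAlgebra
       Nonempty ((R ⊗[A i] Bi) ≃ₐ[R] B)) :=
  statement0_general A f R g hg hsurj B hB
end

section
/- Let A = colim A_i be a filtered colimit of commutative rings, let B be a finitely presented commutative A_i-algebra for some index i, and let C be any commutative A_i-algebra. Then the natural map colim_{j ≥ i} Hom_{A_j-alg}(B ⊗_{A_i} A_j, C ⊗_{A_i} A_j) → Hom_{A-alg}(B ⊗_{A_i} A, C ⊗_{A_i} A) is a bijection. -/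
open TensorProduct

universe u

/-!
Tensoring with `C` commutes with direct limits, so `A ⊗ C` is the direct limit of the
`Aⱼ ⊗ C`. By the base-change adjunction, `Aⱼ`-algebra maps `Aⱼ ⊗ B → Aⱼ ⊗ C` are the same as
`Aᵢ`-algebra maps `B → Aⱼ ⊗ C`, so everything reduces to `Hom(B, -)` commuting with direct
limits for finitely presented `B`: a map `B → lim Dⱼ` is lifted by lifting the images of
finitely many generators to some `Dⱼ` and waiting until the finitely many relations hold,
and two lifts agreeing in the limit agree on the generators at some later stage.
-/

/-- Direct limits of modules and algebras are computed on underlying sets, so this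
characterizes them as well. -/
structure IsDirectLimit {ι : Type*} [Preorder ι] {F : ι → Type*}
    (f : ∀ ⦃i j⦄, i ≤ j → F i → F j) {P : Type*} (g : ∀ i, F i → P) : Prop where
  compat : ∀ ⦃i j⦄ (hij : i ≤ j) (x : F i), g j (f hij x) = g i x
  exists_eq : ∀ x : P, ∃ i y, g i y = x
  exists_eq_of_eq : ∀ i (x y : F i), g i x = g i y → ∃ j, ∃ hij : i ≤ j, f hij x = f hij y

namespace IsDirectLimit

variable {ι : Type*} [Preorder ι] {F : ι → Type*}
  {f : ∀ ⦃i j⦄, i ≤ j → F i → F j} {P : Type*} {g : ∀ i, F i → P}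

theorem exists_forall_eq [IsDirectedOrder ι] [DirectedSystem F f] (H : IsDirectLimit f g)
    {α : Type*} (s : Finset α) {j : ι} (x y : α → F j) (hxy : ∀ a ∈ s, g j (x a) = g j (y a)) :
    ∃ k, ∃ hjk : j ≤ k, ∀ a ∈ s, f hjk (x a) = f hjk (y a) := by
  classical
  induction s using Finset.induction_on with
  | empty => exact ⟨j, le_rfl, by simp⟩
  | insert a s _ ih =>
    obtain ⟨k₁, hjk₁, hk₁⟩ := ih fun b hb ↦ hxy b (Finset.mem_insert_of_mem hb)
    obtain ⟨k₂, hjk₂, hk₂⟩ := H.exists_eq_of_eq j _ _ (hxy a (Finset.mem_insert_self a s))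
    obtain ⟨k, hk₁k, hk₂k⟩ := exists_ge_ge k₁ k₂
    refine ⟨k, hjk₁.trans hk₁k, fun b hb ↦ ?_⟩
    rcases Finset.mem_insert.1 hb with rfl | hb
    · rw [← DirectedSystem.map_map (f := f) hjk₂ hk₂k, ← DirectedSystem.map_map (f := f) hjk₂ hk₂k,
        hk₂]
    · rw [← DirectedSystem.map_map (f := f) hjk₁ hk₁k, ← DirectedSystem.map_map (f := f) hjk₁ hk₁k,
        hk₁ b hb]

theorem exists_forall_apply_eq [IsDirectedOrder ι] [Nonempty ι] (H : IsDirectLimit f g)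
    {α : Type*} [Finite α] (x : α → P) : ∃ j, ∃ y : α → F j, ∀ a, g j (y a) = x a := by
  choose i y hy using fun a ↦ H.exists_eq (x a)
  obtain ⟨j, hij⟩ := Finite.exists_le i
  exact ⟨j, fun a ↦ f (hij a) (y a), fun a ↦ by rw [H.compat, hy]⟩

theorem comp_bijective {Q : Type*} (H : IsDirectLimit f g) {e : P → Q}
    (he : Function.Bijective e) : IsDirectLimit f (fun i ↦ e ∘ g i) where
  compat i j hij x := by simp only [Function.comp_apply, H.compat]
  exists_eq x := by
    obtain ⟨p, rfl⟩ := he.2 x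
    obtain ⟨i, y, rfl⟩ := H.exists_eq p
    exact ⟨i, y, rfl⟩
  exists_eq_of_eq i x y hxy := H.exists_eq_of_eq i x y (he.1 hxy)

section Module

variable {R : Type*} [CommSemiring R] {G : ι → Type*} [∀ i, AddCommMonoid (G i)]
  [∀ i, Module R (G i)] {f : ∀ i j, i ≤ j → G i →ₗ[R] G j} {P : Type*} [AddCommMonoid P]
  [Module R P] {g : ∀ i, G i →ₗ[R] P}

theorem _root_.Module.DirectLimit.isDirectLimit_of [DecidableEq ι] [IsDirectedOrder ι]
    [Nonempty ι] [DirectedSystem G (f · · ·)] :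
    IsDirectLimit (f · · ·) (Module.DirectLimit.of R ι G f ·) where
  compat _ _ _ _ := Module.DirectLimit.of_f
  exists_eq := Module.DirectLimit.exists_of
  exists_eq_of_eq _ _ _ := Module.DirectLimit.exists_eq_of_of_eq

theorem bijective_lift [DecidableEq ι] [IsDirectedOrder ι] [Nonempty ι]
    (H : IsDirectLimit (f · · ·) (g ·)) :
    Function.Bijective (Module.DirectLimit.lift R ι G f g fun _ _ hij x ↦ H.compat hij x) := by
  refine ⟨fun z w hzw ↦ ?_, fun p ↦ ?_⟩
  · obtain ⟨i, x, y, rfl, rfl⟩ := Module.DirectLimit.exists_of₂ z w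
    simp only [Module.DirectLimit.lift_of] at hzw
    obtain ⟨j, hij, hxy⟩ := H.exists_eq_of_eq i x y hzw
    rw [← Module.DirectLimit.of_f (hij := hij), ← Module.DirectLimit.of_f (hij := hij), hxy]
  · obtain ⟨i, x, rfl⟩ := H.exists_eq p
    exact ⟨_, Module.DirectLimit.lift_of _ _ x⟩

theorem rTensor [IsDirectedOrder ι] [Nonempty ι] [DirectedSystem G (f · · ·)]
    (H : IsDirectLimit (f · · ·) (g ·)) (M : Type*) [AddCommMonoid M] [Module R M] :
    IsDirectLimit (fun _ _ hij ↦ (f _ _ hij).rTensor M) (fun i ↦ (g i).rTensor M) := by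
  classical
  let e := LinearEquiv.ofBijective _ H.bijective_lift
  have := (Module.DirectLimit.isDirectLimit_of (R := R) (G := (G · ⊗[R] M))
    (f := fun _ _ hij ↦ (f _ _ hij).rTensor M)).comp_bijective
    ((e.rTensor M).toEquiv.bijective.comp (TensorProduct.directLimitLeft _ M).symm.bijective)
  convert this using 2 with i
  ext x
  induction x using TensorProduct.induction_on with
  | zero => simp
  | tmul a m => simp [e]
  | add x y hx hy => simp_all

end Module

section Algebra

variable {R : Type*} [CommRing R] {D : ι → Type*} [∀ i, CommRing (D i)] [∀ i, Algebra R (D i)]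
  {f : ∀ i j, i ≤ j → D i →ₐ[R] D j} {P : Type*} [CommRing P] [Algebra R P]
  {g : ∀ i, D i →ₐ[R] P}

theorem comp_eq (H : IsDirectLimit (f · · ·) (g ·)) {i j : ι} (hij : i ≤ j) :
    (g j).comp (f i j hij) = g i :=
  AlgHom.ext (H.compat hij)

theorem algebraTensorProductMap [IsDirectedOrder ι] [Nonempty ι] [DirectedSystem D (f · · ·)]
    (H : IsDirectLimit (f · · ·) (g ·)) (C : Type*) [CommRing C] [Algebra R C] :
    IsDirectLimit (fun _ _ hij ↦ Algebra.TensorProduct.map (f _ _ hij) (AlgHom.id R C))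
      (fun i ↦ Algebra.TensorProduct.map (g i) (AlgHom.id R C)) :=
  have : DirectedSystem D fun i j hij ↦ (f i j hij).toLinearMap := ‹_›
  H.rTensor (f := fun i j hij ↦ (f i j hij).toLinearMap) (g := fun i ↦ (g i).toLinearMap) C

theorem _root_.DirectedSystem.algebraTensorProductMap [DirectedSystem D (f · · ·)]
    (C : Type*) [CommRing C] [Algebra R C] :
    DirectedSystem (D · ⊗[R] C)
      (fun _ _ hij ↦ Algebra.TensorProduct.map (f _ _ hij) (AlgHom.id R C)) :=
  have : DirectedSystem D fun i j hij ↦ (f i j hij).toLinearMap := ‹_›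
  inferInstanceAs (DirectedSystem (D · ⊗[R] C)
    (fun _ _ hij ↦ ((f _ _ hij).toLinearMap).rTensor C))

theorem exists_comp_eq_comp_of_finiteType [IsDirectedOrder ι] [DirectedSystem D (f · · ·)]
    (H : IsDirectLimit (f · · ·) (g ·)) {B : Type*} [CommRing B] [Algebra R B]
    [Algebra.FiniteType R B] {j : ι} (φ ψ : B →ₐ[R] D j) (h : (g j).comp φ = (g j).comp ψ) :
    ∃ k, ∃ hjk : j ≤ k, (f j k hjk).comp φ = (f j k hjk).comp ψ := by
  obtain ⟨s, hs⟩ := Algebra.FiniteType.out (R := R) (A := B)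
  obtain ⟨k, hjk, hk⟩ := H.exists_forall_eq s φ ψ fun b _ ↦ AlgHom.congr_fun h b
  exact ⟨k, hjk, AlgHom.ext_of_adjoin_eq_top hs fun b hb ↦ hk b hb⟩

theorem exists_comp_eq_of_finitePresentation [IsDirectedOrder ι] [Nonempty ι]
    [DirectedSystem D (f · · ·)] (H : IsDirectLimit (f · · ·) (g ·)) {B : Type*} [CommRing B]
    [Algebra R B] [Algebra.FinitePresentation R B] (χ : B →ₐ[R] P) :
    ∃ j, ∃ φ : B →ₐ[R] D j, (g j).comp φ = χ := by
  obtain ⟨n, p, hp, t, ht⟩ := Algebra.FinitePresentation.out (R := R) (A := B)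
  obtain ⟨j, d, hd⟩ := H.exists_forall_apply_eq fun r : Fin n ↦ χ (p (.X r))
  have hd : (g j).comp (MvPolynomial.aeval d) = χ.comp p :=
    MvPolynomial.algHom_ext fun r ↦ by simpa using hd r
  obtain ⟨k, hjk, hk⟩ := H.exists_forall_eq t (MvPolynomial.aeval d) 0 fun q hq ↦ by
    have hpq : p q = 0 :=
      RingHom.mem_ker.1 (show q ∈ RingHom.ker p.toRingHom from ht ▸ Ideal.subset_span hq)
    rw [← AlgHom.comp_apply, hd, AlgHom.comp_apply, hpq, map_zero, Pi.zero_apply, map_zero]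
  have hker : RingHom.ker p.toRingHom ≤
      RingHom.ker ((f j k hjk).comp (MvPolynomial.aeval d)).toRingHom := by
    rw [← ht, Ideal.span_le]
    intro q hq
    simpa using hk q hq
  refine ⟨k, AlgHom.liftOfSurjective p hp _ hker, (AlgHom.cancel_right hp).1 ?_⟩
  rw [AlgHom.comp_assoc, AlgHom.liftOfSurjective_comp, ← AlgHom.comp_assoc, H.comp_eq, hd]

end Algebra

end IsDirectLimit

theorem AlgHom.liftEquiv_map_comp_symm_apply {R S T B C : Type*} [CommRing R] [CommRing S]
    [CommRing T] [CommRing B] [CommRing C] [Algebra R S] [Algebra R T] [Algebra R B]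
    [Algebra R C] (σ : S →ₐ[R] T) (φ : S ⊗[R] B →ₐ[S] S ⊗[R] C) (x : S ⊗[R] B) :
    liftEquiv R T B (T ⊗[R] C)
        ((Algebra.TensorProduct.map σ (AlgHom.id R C)).comp ((liftEquiv R S B (S ⊗[R] C)).symm φ))
        (Algebra.TensorProduct.map σ (AlgHom.id R B) x) =
      Algebra.TensorProduct.map σ (AlgHom.id R C) (φ x) := by
  induction x using TensorProduct.induction_on with
  | zero => simp
  | tmul s b =>
    have hsb : s ⊗ₜ[R] b = s • (1 : S) ⊗ₜ[R] b := by
      rw [TensorProduct.smul_tmul', smul_eq_mul, mul_one]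
    rw [Algebra.TensorProduct.map_tmul, AlgHom.id_apply, liftEquiv_tmul, AlgHom.comp_apply,
      liftEquiv_symm_apply, hsb, map_smul, Algebra.smul_def, Algebra.smul_def, map_mul]
    simp
  | add x y hx hy => simp_all

theorem statement1
    {ι : Type u} [Preorder ι] [IsDirected ι (· ≤ ·)] [Nonempty ι]
    (R0 : Type u) [CommRing R0]
    (A : ι → Type u) [∀ i, CommRing (A i)] [∀ i, Algebra R0 (A i)]
    (f : ∀ i j, i ≤ j → A i →ₐ[R0] A j)
    (hf_id : ∀ i, f i i le_rfl = AlgHom.id R0 (A i))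
    (hf_comp : ∀ i j k (hij : i ≤ j) (hjk : j ≤ k),
      (f j k hjk).comp (f i j hij) = f i k (le_trans hij hjk))
    (R : Type u) [CommRing R] [Algebra R0 R]
    (g : ∀ i, A i →ₐ[R0] R)
    (hg : ∀ i j (hij : i ≤ j), (g j).comp (f i j hij) = g i)
    (hsurj : ∀ x : R, ∃ i y, g i y = x)
    (hexact : ∀ i (x y : A i), g i x = g i y →
      ∃ j, ∃ hij : i ≤ j, f i j hij x = f i j hij y)
    (B : Type u) [CommRing B] [Algebra R0 B]
    (C : Type u) [CommRing C] [Algebra R0 C]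
    (hB : Algebra.FinitePresentation R0 B) :
    -- surjectivity of the natural map from the colimit of hom-sets
    ((∀ χ : (R ⊗[R0] B) →ₐ[R] (R ⊗[R0] C),
      ∃ (j : ι) (φ : ((A j) ⊗[R0] B) →ₐ[A j] ((A j) ⊗[R0] C)),
        ∀ x, χ (Algebra.TensorProduct.map (g j) (AlgHom.id R0 B) x) =
          Algebra.TensorProduct.map (g j) (AlgHom.id R0 C) (φ x))
    -- injectivity of the natural map from the colimit of hom-sets
    ∧ (∀ (j : ι) (φ ψ : ((A j) ⊗[R0] B) →ₐ[A j] ((A j) ⊗[R0] C)),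
        (∀ x, Algebra.TensorProduct.map (g j) (AlgHom.id R0 C) (φ x) =
          Algebra.TensorProduct.map (g j) (AlgHom.id R0 C) (ψ x)) →
        ∃ (k : ι) (hjk : j ≤ k),
          ∀ x, Algebra.TensorProduct.map (f j k hjk) (AlgHom.id R0 C) (φ x) =
            Algebra.TensorProduct.map (f j k hjk) (AlgHom.id R0 C) (ψ x))) := by
  have : DirectedSystem A (f · · ·) :=
    ⟨fun i x ↦ by rw [hf_id]; rfl, fun _ _ _ hij hjk x ↦ by rw [← hf_comp _ _ _ hij hjk]; rfl⟩
  have hA : IsDirectLimit (f · · ·) (g ·) :=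
    ⟨fun i j hij x ↦ AlgHom.congr_fun (hg i j hij) x, hsurj, hexact⟩
  have hAC := hA.algebraTensorProductMap C
  have := DirectedSystem.algebraTensorProductMap (f := f) C
  refine ⟨fun χ ↦ ?_, fun j φ ψ hφψ ↦ ?_⟩
  · obtain ⟨j, v, hv⟩ := hAC.exists_comp_eq_of_finitePresentation ((AlgHom.liftEquiv ..).symm χ)
    refine ⟨j, AlgHom.liftEquiv _ _ _ _ v, fun x ↦ ?_⟩
    rw [← AlgHom.liftEquiv_map_comp_symm_apply, Equiv.symm_apply_apply, hv,
      Equiv.apply_symm_apply]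
  · obtain ⟨k, hjk, hk⟩ := hAC.exists_comp_eq_comp_of_finiteType ((AlgHom.liftEquiv ..).symm φ)
      ((AlgHom.liftEquiv ..).symm ψ) (AlgHom.ext fun b ↦ hφψ (1 ⊗ₜ b))
    refine ⟨k, hjk, fun x ↦ ?_⟩
    rw [← AlgHom.liftEquiv_map_comp_symm_apply, ← AlgHom.liftEquiv_map_comp_symm_apply, hk]
end

section
/- Let A = colim A_i be a filtered colimit of commutative rings and let P be a finitely generated projective A-module. Then there exists an index i and a finitely generated projective A_i-module P_i such that P ≅ P_i ⊗_{A_i} A. -/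
/-!
A finitely generated projective module is the image of an idempotent matrix `M`. Its finitely
many entries lift to some `A i`, and the relation `M * M = M`, which holds in the colimit, already
holds for the lift at a later stage `A j`. The image `P_j` of the lifted idempotent is finitely
generated projective over `A j`, and, being a direct summand of `A j ^ n`, its base change is the
image of `M`, that is `P`.
-/

open TensorProduct

namespace LinearMap

variable {R M Q : Type*} [Semiring R] [AddCommMonoid M] [AddCommMonoid Q] [Module R M]
  [Module R Q]

noncomputable def equivRangeOfLeftInverse {i : Q →ₗ[R] M} {p : M →ₗ[R] Q}
    (h : p ∘ₗ i = id) : Q ≃ₗ[R] range (i ∘ₗ p) :=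
  (LinearEquiv.ofLeftInverse (g := p) (LinearMap.congr_fun h)).trans <|
    LinearEquiv.ofEq _ _ (range_comp_of_range_eq_top i <| range_eq_top_of_surjective p <|
      Function.LeftInverse.surjective (LinearMap.congr_fun h)).symm

theorem rangeRestrict_comp_subtype_of_isIdempotentElem {e : Module.End R M}
    (he : IsIdempotentElem e) : e.rangeRestrict ∘ₗ (range e).subtype = id := by
  ext ⟨_, y, rfl⟩
  exact LinearMap.congr_fun he y

end LinearMap

theorem Module.exists_isIdempotentElem_matrix_range_toLin'_equiv (R P : Type*) [CommSemiring R]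
    [AddCommMonoid P] [Module R P] [Module.Finite R P] [Module.Projective R P] :
    ∃ (n : ℕ) (M : Matrix (Fin n) (Fin n) R),
      IsIdempotentElem M ∧ Nonempty (LinearMap.range (Matrix.toLin' M) ≃ₗ[R] P) := by
  obtain ⟨n, π, hπ⟩ := Module.Finite.exists_fin' R P
  obtain ⟨s, hs⟩ := Module.projective_lifting_property π LinearMap.id hπ
  have hsπ : IsIdempotentElem (s ∘ₗ π) := by
    change (s ∘ₗ π) ∘ₗ (s ∘ₗ π) = s ∘ₗ π
    rw [LinearMap.comp_assoc, ← LinearMap.comp_assoc π, hs, LinearMap.id_comp]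
  refine ⟨n, LinearMap.toMatrix' (s ∘ₗ π), hsπ.map LinearMap.toMatrixAlgEquiv', ?_⟩
  rw [Matrix.toLin'_toMatrix']
  exact ⟨(LinearMap.equivRangeOfLeftInverse hs).symm⟩

namespace Matrix

variable {B R : Type*} [CommSemiring B] [CommSemiring R] [Algebra B R]

theorem piScalarRight_comp_baseChange_toLin' {m n : Type*} [Fintype m] [DecidableEq m]
    [Fintype n] [DecidableEq n] (N : Matrix m n B) :
    (piScalarRight B R R m).toLinearMap ∘ₗ (toLin' N).baseChange R =
      toLin' (N.map (algebraMap B R)) ∘ₗ (piScalarRight B R R n).toLinearMap := by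
  refine TensorProduct.AlgebraTensorModule.ext fun r v ↦ funext fun k ↦ ?_
  simp [Algebra.smul_def, mulVec, dotProduct, Finset.sum_mul, mul_assoc]

variable {n : Type*} [Fintype n] [DecidableEq n] {N : Matrix n n B}

theorem isIdempotentElem_toLin' (hN : IsIdempotentElem N) : IsIdempotentElem (toLin' N) :=
  hN.map toLinAlgEquiv'

theorem projective_range_toLin' (hN : IsIdempotentElem N) :
    Module.Projective B (LinearMap.range (toLin' N)) :=
  .of_split _ _ (LinearMap.rangeRestrict_comp_subtype_of_isIdempotentElem
    (isIdempotentElem_toLin' hN))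

-- Base change preserves the splitting `(n → B) = range ⊕ ker`, so no flatness is needed.
noncomputable def baseChangeRangeToLin'Equiv (hN : IsIdempotentElem N) :
    R ⊗[B] LinearMap.range (toLin' N) ≃ₗ[R] LinearMap.range (toLin' (N.map (algebraMap B R))) := by
  let α := piScalarRight B R R n
  have hpi : ((toLin' N).rangeRestrict.baseChange R ∘ₗ α.symm.toLinearMap) ∘ₗ
      (α.toLinearMap ∘ₗ (LinearMap.range (toLin' N)).subtype.baseChange R) = LinearMap.id := by
    rw [LinearMap.comp_assoc, ← LinearMap.comp_assoc _ α.toLinearMap, α.symm_comp,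
      LinearMap.id_comp, ← LinearMap.baseChange_comp,
      LinearMap.rangeRestrict_comp_subtype_of_isIdempotentElem (isIdempotentElem_toLin' hN),
      LinearMap.baseChange_id]
  refine (LinearMap.equivRangeOfLeftInverse hpi).trans (LinearEquiv.ofEq _ _ ?_)
  have : (LinearMap.range (toLin' N)).subtype ∘ₗ (toLin' N).rangeRestrict = toLin' N := rfl
  rw [LinearMap.comp_assoc, ← LinearMap.comp_assoc α.symm.toLinearMap,
    ← LinearMap.baseChange_comp, this, ← LinearMap.comp_assoc α.symm.toLinearMap,
    piScalarRight_comp_baseChange_toLin', LinearMap.comp_assoc, α.comp_symm, LinearMap.comp_id]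

end Matrix

section FilteredColimit

variable {ι : Type*} [Preorder ι] [IsDirected ι (· ≤ ·)] [Nonempty ι] {A : ι → Type*}
  [∀ i, Semiring (A i)] {f : ∀ i j, i ≤ j → A i →+* A j} {R : Type*} [Semiring R]
  {g : ∀ i, A i →+* R}

theorem exists_lift_of_finite (hg : ∀ i j (hij : i ≤ j), (g j).comp (f i j hij) = g i)
    (hsurj : ∀ x : R, ∃ i y, g i y = x) {σ : Type*} [Finite σ] (x : σ → R) :
    ∃ i, ∃ y : σ → A i, g i ∘ y = x := by
  choose i₀ y₀ hy₀ using fun s ↦ hsurj (x s)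
  obtain ⟨i, hi⟩ := Finite.exists_le i₀
  refine ⟨i, fun s ↦ f (i₀ s) i (hi s) (y₀ s), funext fun s ↦ ?_⟩
  rw [Function.comp_apply, ← RingHom.comp_apply, hg, hy₀]

theorem exists_map_eq_map_of_finite
    (hf_comp : ∀ i j k (hij : i ≤ j) (hjk : j ≤ k),
      (f j k hjk).comp (f i j hij) = f i k (le_trans hij hjk))
    (hexact : ∀ i (x y : A i), g i x = g i y → ∃ j, ∃ hij : i ≤ j, f i j hij x = f i j hij y)
    {σ : Type*} [Finite σ] {i : ι} {y z : σ → A i} (h : g i ∘ y = g i ∘ z) :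
    ∃ j, ∃ hij : i ≤ j, f i j hij ∘ y = f i j hij ∘ z := by
  choose j₀ hij₀ hj₀ using fun s ↦ hexact i (y s) (z s) (congr_fun h s)
  obtain ⟨j, hj⟩ := Finite.exists_le (Option.elim · i j₀)
  have hij : i ≤ j := hj none
  refine ⟨j, hij, funext fun s ↦ ?_⟩
  have hcomp := hf_comp i (j₀ s) j (hij₀ s) (hj (some s))
  simp only [Function.comp_apply, ← hcomp, RingHom.comp_apply, hj₀]

theorem exists_isIdempotentElem_map_eq
    (hf_comp : ∀ i j k (hij : i ≤ j) (hjk : j ≤ k),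
      (f j k hjk).comp (f i j hij) = f i k (le_trans hij hjk))
    (hg : ∀ i j (hij : i ≤ j), (g j).comp (f i j hij) = g i)
    (hsurj : ∀ x : R, ∃ i y, g i y = x)
    (hexact : ∀ i (x y : A i), g i x = g i y → ∃ j, ∃ hij : i ≤ j, f i j hij x = f i j hij y)
    {n : Type*} [Fintype n] {M : Matrix n n R} (hM : IsIdempotentElem M) :
    ∃ j, ∃ N : Matrix n n (A j), IsIdempotentElem N ∧ N.map (g j) = M := by
  obtain ⟨i, N₀, hN₀⟩ := exists_lift_of_finite hg hsurj (Function.uncurry M)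
  replace hN₀ : (Matrix.of (Function.curry N₀)).map (g i) = M :=
    Matrix.ext fun a b ↦ congr_fun hN₀ (a, b)
  set N := Matrix.of (Function.curry N₀)
  have hNN : (N * N).map (g i) = N.map (g i) := by
    rw [Matrix.map_mul, hN₀, hM.eq]
  obtain ⟨j, hij, hj⟩ := exists_map_eq_map_of_finite hf_comp hexact
    (y := Function.uncurry (N * N)) (z := Function.uncurry N)
    (funext fun p ↦ congr_fun₂ hNN p.1 p.2)
  refine ⟨j, N.map (f i j hij), ?_, ?_⟩
  · change _ * _ = _
    rw [← Matrix.map_mul]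
    exact Matrix.ext fun a b ↦ congr_fun hj (a, b)
  · rw [Matrix.map_map, ← RingHom.coe_comp, hg, hN₀]

end FilteredColimit

theorem statement2_general
    {ι : Type u} [Preorder ι] [IsDirected ι (· ≤ ·)] [Nonempty ι]
    (A : ι → Type u) [∀ i, CommRing (A i)]
    (f : ∀ i j, i ≤ j → A i →+* A j)
    (hf_comp : ∀ i j k (hij : i ≤ j) (hjk : j ≤ k),
      (f j k hjk).comp (f i j hij) = f i k (le_trans hij hjk))
    (R : Type u) [CommRing R]
    (g : ∀ i, A i →+* R)
    (hg : ∀ i j (hij : i ≤ j), (g j).comp (f i j hij) = g i)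
    (hsurj : ∀ x : R, ∃ i y, g i y = x)
    (hexact : ∀ i (x y : A i), g i x = g i y →
      ∃ j, ∃ hij : i ≤ j, f i j hij x = f i j hij y)
    (P : Type u) [AddCommGroup P] [Module R P]
    (hfin : Module.Finite R P) (hproj : Module.Projective R P) :
    ∃ (i : ι) (Pi : Type u) (_ : AddCommGroup Pi) (_ : Module (A i) Pi),
      Module.Finite (A i) Pi ∧ Module.Projective (A i) Pi ∧
      (letI : Algebra (A i) R := (g i).toAlgebra
       Nonempty ((R ⊗[A i] Pi) ≃ₗ[R] P)) := by
  obtain ⟨n, M, hM, ⟨eP⟩⟩ := Module.exists_isIdempotentElem_matrix_range_toLin'_equiv R P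
  obtain ⟨j, N, hN, rfl⟩ := exists_isIdempotentElem_map_eq hf_comp hg hsurj hexact hM
  let : Algebra (A j) R := (g j).toAlgebra
  exact ⟨j, LinearMap.range (Matrix.toLin' N), _, _, inferInstance,
    Matrix.projective_range_toLin' hN, ⟨(Matrix.baseChangeRangeToLin'Equiv hN).trans eP⟩⟩

theorem statement2
    {ι : Type u} [Preorder ι] [IsDirected ι (· ≤ ·)] [Nonempty ι]
    (A : ι → Type u) [∀ i, CommRing (A i)]
    (f : ∀ i j, i ≤ j → A i →+* A j)
    (hf_id : ∀ i, f i i le_rfl = RingHom.id (A i))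
    (hf_comp : ∀ i j k (hij : i ≤ j) (hjk : j ≤ k),
      (f j k hjk).comp (f i j hij) = f i k (le_trans hij hjk))
    (R : Type u) [CommRing R]
    (g : ∀ i, A i →+* R)
    (hg : ∀ i j (hij : i ≤ j), (g j).comp (f i j hij) = g i)
    (hsurj : ∀ x : R, ∃ i y, g i y = x)
    (hexact : ∀ i (x y : A i), g i x = g i y →
      ∃ j, ∃ hij : i ≤ j, f i j hij x = f i j hij y)
    (P : Type u) [AddCommGroup P] [Module R P]
    (hfin : Module.Finite R P) (hproj : Module.Projective R P) :
    ∃ (i : ι) (Pi : Type u) (_ : AddCommGroup Pi) (_ : Module (A i) Pi),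
      Module.Finite (A i) Pi ∧ Module.Projective (A i) Pi ∧
      (letI : Algebra (A i) R := (g i).toAlgebra
       Nonempty ((R ⊗[A i] Pi) ≃ₗ[R] P)) :=
  statement2_general A f hf_comp R g hg hsurj hexact P hfin hproj
end

section
/- Let A = colim A_i be a filtered colimit of commutative rings, let M_i be a finitely presented A_i-module for some i, and suppose M_i ⊗_{A_i} A = 0. Then there exists j ≥ i with M_i ⊗_{A_i} A_j = 0. -/
/-!
Tensor products commute with filtered colimits, so `R ⊗ M` is the colimit of the `A j ⊗ M` and
an element of some `A i ⊗ M` that vanishes in `R ⊗ M` already vanishes at a later stage. Hence the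
kernels of `m ↦ 1 ⊗ m : M → A j ⊗ M` form an increasing family of submodules exhausting `M`; as `M`
is finitely generated, one of them is all of `M`, and then `A j ⊗ M = 0`.
-/

open TensorProduct

theorem TensorProduct.subsingleton_of_forall_one_tmul_eq_zero {R B M : Type*} [CommSemiring R]
    [Semiring B] [Algebra R B] [AddCommMonoid M] [Module R M]
    (h : ∀ m : M, (1 : B) ⊗ₜ[R] m = 0) : Subsingleton (B ⊗[R] M) := by
  refine subsingleton_of_forall_eq 0 fun x ↦ ?_
  induction x using TensorProduct.induction_on with
  | zero => rfl
  | tmul b m => rw [← mul_one b, ← smul_eq_mul, ← smul_tmul', h, smul_zero]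
  | add x y hx hy => rw [hx, hy, add_zero]

theorem Module.Finite.exists_eq_top_of_monotone {R M ι : Type*} [Semiring R] [AddCommMonoid M]
    [Module R M] [Module.Finite R M] [Preorder ι] [Nonempty ι] [IsDirectedOrder ι]
    {N : ι → Submodule R M} (hN : Monotone N) (h : ∀ m, ∃ i, m ∈ N i) : ∃ i, N i = ⊤ := by
  have htop : IsCompactElement (⊤ : Submodule R M) :=
    (Submodule.fg_iff_compact ⊤).mp Module.Finite.fg_top
  obtain ⟨_, ⟨i, rfl⟩, hi⟩ :=
    (CompleteLattice.isCompactElement_iff_le_of_directed_sSup_le _ _).mp htop (Set.range N)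
      (Set.range_nonempty N) (directedOn_range.mpr hN.directed_le) fun m _ ↦ by
      obtain ⟨i, hi⟩ := h m
      exact Submodule.mem_sSup_of_mem (Set.mem_range_self i) hi
  exact ⟨i, top_le_iff.mp hi⟩

namespace Module.DirectLimit

variable {R : Type*} [CommSemiring R] {ι : Type*} [Preorder ι] [DecidableEq ι] {G : ι → Type*}
  [∀ i, AddCommMonoid (G i)] [∀ i, Module R (G i)] {f : ∀ i j, i ≤ j → G i →ₗ[R] G j}
  {P : Type*} [AddCommMonoid P] [Module R P] {g : ∀ i, G i →ₗ[R] P}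
  (Hg : ∀ i j hij x, g j (f i j hij x) = g i x)
  [Nonempty ι] [IsDirectedOrder ι]
  (surj : ∀ x : P, ∃ i y, g i y = x)
  (exact : ∀ i (x y : G i), g i x = g i y → ∃ j hij, f i j hij x = f i j hij y)
include Hg surj exact

theorem lift_bijective_of_exact : Function.Bijective (lift R ι G f g Hg) := by
  refine ⟨fun z w hzw ↦ ?_, fun x ↦ ?_⟩
  · obtain ⟨i, x, y, rfl, rfl⟩ := exists_of₂ z w
    rw [lift_of, lift_of] at hzw
    obtain ⟨j, hij, hxy⟩ := exact i x y hzw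
    rw [← of_f (hij := hij), hxy, of_f]
  · obtain ⟨i, y, rfl⟩ := surj x
    exact ⟨of R ι G f i y, lift_of ..⟩

theorem exists_rTensor_eq_zero_of_exact [DirectedSystem G (f · · ·)]
    (M : Type*) [AddCommMonoid M] [Module R M] {i : ι} (x : G i ⊗[R] M)
    (hx : (g i).rTensor M x = 0) :
    ∃ j hij, (f i j hij).rTensor M x = 0 := by
  let e := LinearEquiv.ofBijective _ (lift_bijective_of_exact Hg surj exact)
  have he : e.symm.toLinearMap ∘ₗ g i = of R ι G f i := by
    ext y
    exact e.symm_apply_eq.mpr (lift_of g Hg y).symm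
  have : of R ι _ (fun i j h ↦ (f i j h).rTensor M) i x = 0 := by
    rw [← TensorProduct.directLimitLeft_rTensor_of, ← he, LinearMap.rTensor_comp_apply, hx,
      map_zero, map_zero]
  exact of.zero_exact this

end Module.DirectLimit

theorem statement3
    {ι : Type u} [Preorder ι] [IsDirected ι (· ≤ ·)] [Nonempty ι]
    (R0 : Type u) [CommRing R0]
    (A : ι → Type u) [∀ i, CommRing (A i)] [∀ i, Algebra R0 (A i)]
    (f : ∀ i j, i ≤ j → A i →ₐ[R0] A j)
    (hf_id : ∀ i, f i i le_rfl = AlgHom.id R0 (A i))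
    (hf_comp : ∀ i j k (hij : i ≤ j) (hjk : j ≤ k),
      (f j k hjk).comp (f i j hij) = f i k (le_trans hij hjk))
    (R : Type u) [CommRing R] [Algebra R0 R]
    (g : ∀ i, A i →ₐ[R0] R)
    (hg : ∀ i j (hij : i ≤ j), (g j).comp (f i j hij) = g i)
    (hsurj : ∀ x : R, ∃ i y, g i y = x)
    (hexact : ∀ i (x y : A i), g i x = g i y →
      ∃ j, ∃ hij : i ≤ j, f i j hij x = f i j hij y)
    (M : Type u) [AddCommGroup M] [Module R0 M]
    (hM : Module.FinitePresentation R0 M)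
    (hzero : Subsingleton (R ⊗[R0] M)) :
    ∃ j, Subsingleton ((A j) ⊗[R0] M) := by
  classical
  have : DirectedSystem A fun i j h ↦ (f i j h).toLinearMap :=
    ⟨fun i x ↦ by simp [hf_id], fun _ _ _ hij hjk x ↦ AlgHom.congr_fun (hf_comp _ _ _ hij hjk) x⟩
  let N (j : ι) : Submodule R0 M := LinearMap.ker (TensorProduct.mk R0 (A j) M 1)
  have hN : Monotone N := fun j k hjk m (hm : (1 : A j) ⊗ₜ[R0] m = 0) ↦ by
    simpa [N] using congrArg ((f j k hjk).toLinearMap.rTensor M) hm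
  have hexhaust (m : M) : ∃ j, m ∈ N j := by
    obtain ⟨i⟩ := ‹Nonempty ι›
    obtain ⟨j, _, hj⟩ := Module.DirectLimit.exists_rTensor_eq_zero_of_exact
      (f := fun i j h ↦ (f i j h).toLinearMap) (g := fun i ↦ (g i).toLinearMap)
      (fun i j hij x ↦ AlgHom.congr_fun (hg i j hij) x) hsurj hexact M
      ((1 : A i) ⊗ₜ[R0] m) (Subsingleton.elim _ _)
    exact ⟨j, by simpa [N] using hj⟩
  obtain ⟨j, hj⟩ := Module.Finite.exists_eq_top_of_monotone hN hexhaust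
  exact ⟨j, TensorProduct.subsingleton_of_forall_one_tmul_eq_zero fun m ↦
    (hj ▸ Submodule.mem_top : m ∈ N j)⟩
end

section
/- Let A be a commutative ring, B a finitely presented commutative A-algebra, and f : B → B an A-algebra idempotent endomorphism (f ∘ f = f). Then f splits: there exists a commutative A-algebra C with A-algebra maps u : B → C and v : C → B such that u ∘ v = id_C and v ∘ u = f; moreover C is finitely presented over A. -/
/-!
An idempotent `f` splits through `B ⧸ ker f`. If `s` generates `B`, then `ker f` is the ideal
generated by the elements `x - f x` with `x ∈ s`: modulo that ideal, `f` and the identity agree on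
generators and hence everywhere. So `ker f` is finitely generated and the quotient is finitely
presented.
-/

namespace AlgHom

variable {A B : Type*} [CommRing A] [CommRing B] [Algebra A B]

theorem self_sub_apply_mem_ker_of_idempotent {f : B →ₐ[A] B} (hf : f.comp f = f) (x : B) :
    x - f x ∈ RingHom.ker f := by
  rw [RingHom.mem_ker, map_sub, ← comp_apply, hf, sub_self]

theorem ker_eq_span_sub_of_idempotent {s : Set B} (hs : Algebra.adjoin A s = ⊤)
    {f : B →ₐ[A] B} (hf : f.comp f = f) :
    RingHom.ker f = Ideal.span ((fun x => x - f x) '' s) := by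
  set I := Ideal.span ((fun x => x - f x) '' s)
  refine le_antisymm (fun x hx => ?_) ?_
  · have hmk : (Ideal.Quotient.mkₐ A I).comp f = Ideal.Quotient.mkₐ A I := by
      refine ext_of_adjoin_eq_top hs fun y hy => ?_
      rw [comp_apply, Ideal.Quotient.mkₐ_eq_mk, Ideal.Quotient.eq, ← neg_sub]
      exact I.neg_mem (Ideal.subset_span ⟨y, hy, rfl⟩)
    rw [← Ideal.Quotient.eq_zero_iff_mem, ← Ideal.Quotient.mkₐ_eq_mk A, ← hmk, comp_apply,
      RingHom.mem_ker.mp hx, map_zero]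
  · rw [Ideal.span_le]
    rintro _ ⟨y, -, rfl⟩
    exact self_sub_apply_mem_ker_of_idempotent hf y

theorem ker_fg_of_idempotent [Algebra.FiniteType A B] {f : B →ₐ[A] B} (hf : f.comp f = f) :
    (RingHom.ker f).FG := by
  obtain ⟨s, hs⟩ := Algebra.FiniteType.out (R := A) (A := B)
  rw [ker_eq_span_sub_of_idempotent hs hf]
  exact Submodule.fg_span (s.finite_toSet.image _)

theorem mkₐ_comp_kerLiftAlg_of_idempotent {f : B →ₐ[A] B} (hf : f.comp f = f) :
    (Ideal.Quotient.mkₐ A (RingHom.ker f)).comp (Ideal.kerLiftAlg f) = AlgHom.id A _ := by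
  refine Ideal.Quotient.algHom_ext A (ext fun x => ?_)
  simp only [coe_comp, Function.comp_apply, Ideal.Quotient.mkₐ_eq_mk, Ideal.kerLiftAlg_mk,
    coe_id, id_eq]
  rw [Ideal.Quotient.eq, ← neg_sub]
  exact neg_mem (self_sub_apply_mem_ker_of_idempotent hf x)

end AlgHom

theorem statement4
    (A : Type u) (B : Type u) [CommRing A] [CommRing B] [Algebra A B]
    (hB : Algebra.FinitePresentation A B)
    (f : B →ₐ[A] B) (hf : f.comp f = f) :
    ∃ (C : Type u) (_ : CommRing C) (_ : Algebra A C)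
      (u : B →ₐ[A] C) (v : C →ₐ[A] B),
      u.comp v = AlgHom.id A C ∧ v.comp u = f ∧
      Algebra.FinitePresentation A C := by
  have hker : (RingHom.ker f).FG := AlgHom.ker_fg_of_idempotent hf
  refine ⟨B ⧸ RingHom.ker f, inferInstance, inferInstance, Ideal.Quotient.mkₐ A _,
    Ideal.kerLiftAlg f, AlgHom.mkₐ_comp_kerLiftAlg_of_idempotent hf,
    AlgHom.ext (Ideal.kerLiftAlg_mk f), ?_⟩
  refine Algebra.FinitePresentation.of_surjective (Ideal.Quotient.mkₐ_surjective A _) ?_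
  rwa [AlgHom.toRingHom_eq_coe, Ideal.Quotient.mkₐ_ker]
end

section
/- Let A be a commutative ring and B a commutative A-algebra. If B is a retract (in the category of A-algebras) of a finitely presented A-algebra, then B is finitely presented over A. -/
/-!
If `v ∘ u = id`, the kernel of `v : B' → B` is generated by the elements `y - u (v y)`, and since
`y ↦ y - u (v y)` satisfies a Leibniz-type rule it suffices to take `y` among finitely many
algebra generators of `B'`. So `B ≅ B' ⧸ ker v` is a quotient of a finitely presented algebra by
a finitely generated ideal.
-/

namespace AlgHom

variable {A B B' : Type*} [CommRing A] [CommRing B] [CommRing B'] [Algebra A B] [Algebra A B']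

theorem ker_eq_span_sub_of_comp_eq_id {s : Set B'} (hs : Algebra.adjoin A s = ⊤)
    (u : B →ₐ[A] B') (v : B' →ₐ[A] B) (hvu : v.comp u = AlgHom.id A B) :
    RingHom.ker v = Ideal.span ((fun x => x - u (v x)) '' s) := by
  set I := Ideal.span ((fun x => x - u (v x)) '' s)
  have hvu' (b : B) : v (u b) = b := AlgHom.congr_fun hvu b
  have hmem (y : B') : y - u (v y) ∈ I := by
    have hy : y ∈ Algebra.adjoin A s := hs ▸ Algebra.mem_top
    induction hy using Algebra.adjoin_induction with
    | mem x hx => exact Ideal.subset_span ⟨x, hx, rfl⟩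
    | algebraMap a => simp
    | add x y _ _ hx hy =>
      rw [map_add, map_add, add_sub_add_comm]
      exact I.add_mem hx hy
    | mul x y _ _ hx hy =>
      have hxy : x * y - u (v (x * y)) = x * (y - u (v y)) + (x - u (v x)) * u (v y) := by
        simp only [map_mul]; ring
      rw [hxy]
      exact I.add_mem (I.mul_mem_left x hy) (I.mul_mem_right _ hx)
  apply le_antisymm
  · intro y hy
    simpa [(RingHom.mem_ker).1 hy] using hmem y
  · rw [Ideal.span_le]
    rintro _ ⟨x, -, rfl⟩
    simp [hvu']

end AlgHom

theorem statement5
    (A : Type u) (B : Type u) (B' : Type u)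
    [CommRing A] [CommRing B] [CommRing B'] [Algebra A B] [Algebra A B']
    (hB' : Algebra.FinitePresentation A B')
    (u : B →ₐ[A] B') (v : B' →ₐ[A] B) (hvu : v.comp u = AlgHom.id A B) :
    Algebra.FinitePresentation A B := by
  obtain ⟨s, hs⟩ := (Algebra.FiniteType.of_finitePresentation : Algebra.FiniteType A B').out
  have hv : Function.Surjective v := fun b => ⟨u b, AlgHom.congr_fun hvu b⟩
  refine Algebra.FinitePresentation.of_surjective hv ?_
  rw [AlgHom.toRingHom_eq_coe, RingHom.ker_coe_toRingHom,
    AlgHom.ker_eq_span_sub_of_comp_eq_id hs u v hvu]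
  exact Submodule.fg_span (s.finite_toSet.image _)
end

section
/- Let A = colim A_i be a filtered colimit of commutative rings. Then the natural functor from the filtered colimit of the categories of finitely generated projective A_i-modules to the category of finitely generated projective A-modules is an equivalence: it is essentially surjective, and for finitely generated projective A_i-modules P, Q, one has colim_{j≥i} Hom_{A_j}(P ⊗ A_j, Q ⊗ A_j) ≅ Hom_A(P ⊗ A, Q ⊗ A). -/
/-!
A finitely generated projective module is a retract of a finite free one, and over `R0ⁿ` all
questions concern finitely many scalars: an element of `R ⊗ Q` is a finite sum of tensors `r ⊗ q`
whose coefficients come from some `A j`, and an element of `A j ⊗ R0ⁿ` dying in `R ⊗ R0ⁿ` has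
coordinates that already die in some `A k`. Since an `A j`-linear map out of `A j ⊗ P` is determined
by its restriction `P → A j ⊗ Q`, this gives fullness and faithfulness. For essential surjectivity,
write `M` as the image of an idempotent `e` of `R ⊗ R0ⁿ ≅ Rⁿ`: fullness lifts `e` to some `φ` over
`A j`, faithfulness makes `φ` idempotent over some `A k`, and the image of `φ` descends `M`.
-/

open TensorProduct Filter

universe u

section Retract

variable {S X Y X' Y' : Type*} [Semiring S] [AddCommMonoid X] [AddCommMonoid Y]
  [AddCommMonoid X'] [AddCommMonoid Y'] [Module S X] [Module S Y] [Module S X'] [Module S Y']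

theorem nonempty_linearEquiv_of_retract (θ : Y ≃ₗ[S] Y') {i : X →ₗ[S] Y} {r : Y →ₗ[S] X}
    {i' : X' →ₗ[S] Y'} {r' : Y' →ₗ[S] X'} (hri : ∀ x, r (i x) = x) (hri' : ∀ x', r' (i' x') = x')
    (hθ : ∀ y, θ (i (r y)) = i' (r' (θ y))) :
    Nonempty (X ≃ₗ[S] X') := by
  refine ⟨.ofLinearMap (r' ∘ₗ θ.toLinearMap ∘ₗ i) (r ∘ₗ θ.symm.toLinearMap ∘ₗ i') ?_ ?_⟩
  · ext x'
    simp [hθ, hri']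
  · ext x
    simp [← hθ, hri]

end Retract

theorem LinearMap.rTensor_lTensor_apply {R M N P Q : Type*} [CommSemiring R] [AddCommMonoid M]
    [AddCommMonoid N] [AddCommMonoid P] [AddCommMonoid Q] [Module R M] [Module R N] [Module R P]
    [Module R Q] (f : M →ₗ[R] P) (g : N →ₗ[R] Q) (x : M ⊗[R] N) :
    f.rTensor Q (g.lTensor M x) = g.lTensor P (f.rTensor N x) := by
  rw [← LinearMap.comp_apply, LinearMap.rTensor_comp_lTensor, ← LinearMap.lTensor_comp_rTensor,
    LinearMap.comp_apply]

namespace AlgHom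

variable {R0 B C P Q : Type*} [CommSemiring R0] [CommSemiring B] [CommSemiring C]
  [Algebra R0 B] [Algebra R0 C] [AddCommMonoid P] [Module R0 P] [AddCommMonoid Q] [Module R0 Q]

theorem rTensor_smul (σ : B →ₐ[R0] C) (b : B) (x : B ⊗[R0] P) :
    σ.toLinearMap.rTensor P (b • x) = σ b • σ.toLinearMap.rTensor P x := by
  induction x with
  | zero => simp
  | tmul b' p => simp [smul_tmul']
  | add x y hx hy => simp [hx, hy]

theorem rTensor_one_tmul (σ : B →ₐ[R0] C) (p : P) :
    σ.toLinearMap.rTensor P (1 ⊗ₜ p) = 1 ⊗ₜ p := by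
  rw [LinearMap.rTensor_tmul, coe_toLinearMap, map_one]

theorem map_rTensor_eq_of_tmul_one (σ : B →ₐ[R0] C) {φ : B ⊗[R0] P →ₗ[B] B ⊗[R0] Q}
    {χ : C ⊗[R0] P →ₗ[C] C ⊗[R0] Q}
    (h : ∀ p, χ (1 ⊗ₜ p) = σ.toLinearMap.rTensor Q (φ (1 ⊗ₜ p))) (x : B ⊗[R0] P) :
    χ (σ.toLinearMap.rTensor P x) = σ.toLinearMap.rTensor Q (φ x) := by
  induction x with
  | zero => simp
  | tmul b p =>
    have hb : b ⊗ₜ[R0] p = b • (1 : B) ⊗ₜ[R0] p := by rw [smul_tmul', smul_eq_mul, mul_one]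
    rw [hb, rTensor_smul, map_smul, map_smul, rTensor_smul, rTensor_one_tmul, h]
  | add x y hx hy => simp [hx, hy]

theorem piScalarRight_rTensor {ι : Type*} [Fintype ι] [DecidableEq ι] (σ : B →ₐ[R0] C)
    (y : B ⊗[R0] (ι → R0)) (i : ι) :
    piScalarRight R0 R0 C ι (σ.toLinearMap.rTensor (ι → R0) y) i =
      σ (piScalarRight R0 R0 B ι y i) := by
  induction y with
  | zero => simp
  | tmul b v => simp
  | add x y hx hy => simp_all

end AlgHom

section Descent

variable {R0 B C F M : Type*} [CommSemiring R0] [CommSemiring B] [CommSemiring C]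
  [Algebra R0 B] [Algebra R0 C] [AddCommMonoid F] [Module R0 F] [AddCommMonoid M] [Module C M]

theorem AlgHom.nonempty_baseChange_range_equiv (σ : B →ₐ[R0] C) {E : Module.End B (B ⊗[R0] F)}
    (hE : IsIdempotentElem E) {i : M →ₗ[C] C ⊗[R0] F} {r : C ⊗[R0] F →ₗ[C] M}
    (hri : ∀ m, r (i m) = m)
    (hlift : ∀ x, i (r (σ.toLinearMap.rTensor F x)) = σ.toLinearMap.rTensor F (E x)) :
    letI : Algebra B C := σ.toRingHom.toAlgebra
    Nonempty ((C ⊗[B] LinearMap.range E) ≃ₗ[C] M) := by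
  let : Algebra B C := σ.toRingHom.toAlgebra
  have : IsScalarTower R0 B C := .of_algebraMap_eq fun r => (σ.commutes r).symm
  let θ := AlgebraTensorModule.cancelBaseChange R0 B C C F
  have hθ (c : C) (x : B ⊗[R0] F) : θ (c ⊗ₜ x) = c • σ.toLinearMap.rTensor F x := by
    induction x with
    | zero => simp
    | tmul b p =>
      rw [AlgebraTensorModule.cancelBaseChange_tmul, LinearMap.rTensor_tmul, smul_tmul',
        Algebra.smul_def, mul_comm]
      rfl
    | add x y hx hy => simp_all [tmul_add]
  have hproj := LinearMap.IsIdempotentElem.isProj_range E hE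
  have hcod : hproj.codRestrict ∘ₗ (LinearMap.range E).subtype = LinearMap.id :=
    LinearMap.ext hproj.codRestrict_apply_cod
  refine nonempty_linearEquiv_of_retract θ
    (i := (LinearMap.range E).subtype.baseChange C) (r := hproj.codRestrict.baseChange C)
    (fun x => by rw [← LinearMap.comp_apply, ← LinearMap.baseChange_comp, hcod,
      LinearMap.baseChange_id, LinearMap.id_apply]) hri fun y => ?_
  induction y with
  | zero => simp
  | tmul c x =>
    rw [LinearMap.baseChange_tmul, LinearMap.baseChange_tmul, Submodule.subtype_apply,
      LinearMap.IsProj.codRestrict_apply, hθ, hθ, map_smul, map_smul, hlift]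
  | add x y hx hy => simp_all

end Descent

namespace FilteredColimit

variable {ι : Type*} [Preorder ι] {R0 : Type u} [CommRing R0] {A : ι → Type u}
  [∀ i, CommRing (A i)] [∀ i, Algebra R0 (A i)] {f : ∀ i j, i ≤ j → A i →ₐ[R0] A j}
  {R : Type*} [CommRing R] [Algebra R0 R] {g : ∀ i, A i →ₐ[R0] R}
  {P Q : Type*} [AddCommGroup P] [Module R0 P] [AddCommGroup Q] [Module R0 Q]

theorem rTensor_cocone_rTensor_transition (hg : ∀ i j (hij : i ≤ j), (g j).comp (f i j hij) = g i)
    {i j : ι} (hij : i ≤ j) (y : A i ⊗[R0] Q) :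
    (g j).toLinearMap.rTensor Q ((f i j hij).toLinearMap.rTensor Q y) =
      (g i).toLinearMap.rTensor Q y := by
  rw [← LinearMap.rTensor_comp_apply, ← AlgHom.comp_toLinearMap, hg]

theorem eventually_mem_range_rTensor (hg : ∀ i j (hij : i ≤ j), (g j).comp (f i j hij) = g i)
    (hsurj : ∀ x : R, ∃ i y, g i y = x) (x : R ⊗[R0] Q) :
    ∀ᶠ k in atTop, x ∈ LinearMap.range ((g k).toLinearMap.rTensor Q) := by
  induction x with
  | zero => exact .of_forall fun _ => zero_mem _
  | tmul r q =>
    obtain ⟨j, a, rfl⟩ := hsurj r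
    filter_upwards [eventually_ge_atTop j] with k hjk
    exact ⟨(f j k hjk a) ⊗ₜ q, by simpa using rTensor_cocone_rTensor_transition hg hjk (a ⊗ₜ q)⟩
  | add x y hx hy => filter_upwards [hx, hy] with k using add_mem

theorem eventually_transition_eq_zero
    (hf_comp : ∀ i j k (hij : i ≤ j) (hjk : j ≤ k),
      (f j k hjk).comp (f i j hij) = f i k (le_trans hij hjk))
    (hexact : ∀ i (x y : A i), g i x = g i y →
      ∃ j, ∃ hij : i ≤ j, f i j hij x = f i j hij y)
    {j : ι} {a : A j} (ha : g j a = 0) : ∀ᶠ k in atTop, ∀ hjk : j ≤ k, f j k hjk a = 0 := by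
  obtain ⟨k₀, hjk₀, h₀⟩ := hexact j a 0 (by rw [ha, map_zero])
  filter_upwards [eventually_ge_atTop k₀] with k hk₀k hjk
  rw [← hf_comp j k₀ k hjk₀ hk₀k, AlgHom.comp_apply, h₀, map_zero, map_zero]

theorem eventually_rTensor_eq_zero_of_pi
    (hf_comp : ∀ i j k (hij : i ≤ j) (hjk : j ≤ k),
      (f j k hjk).comp (f i j hij) = f i k (le_trans hij hjk))
    (hexact : ∀ i (x y : A i), g i x = g i y →
      ∃ j, ∃ hij : i ≤ j, f i j hij x = f i j hij y)
    {n : Type*} [Fintype n] [DecidableEq n] {j : ι} {y : A j ⊗[R0] (n → R0)}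
    (hy : (g j).toLinearMap.rTensor _ y = 0) :
    ∀ᶠ k in atTop, ∀ hjk : j ≤ k, (f j k hjk).toLinearMap.rTensor _ y = 0 := by
  have hcoord (a : n) : g j (piScalarRight R0 R0 (A j) n y a) = 0 := by
    rw [← AlgHom.piScalarRight_rTensor, hy, map_zero, Pi.zero_apply]
  filter_upwards [eventually_all.2 fun a => eventually_transition_eq_zero hf_comp hexact (hcoord a)]
    with k hk hjk
  refine (piScalarRight R0 R0 (A k) n).map_eq_zero_iff.1 (funext fun a => ?_)
  rw [AlgHom.piScalarRight_rTensor, hk a hjk, Pi.zero_apply]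

theorem eventually_rTensor_eq_zero
    (hf_comp : ∀ i j k (hij : i ≤ j) (hjk : j ≤ k),
      (f j k hjk).comp (f i j hij) = f i k (le_trans hij hjk))
    (hexact : ∀ i (x y : A i), g i x = g i y →
      ∃ j, ∃ hij : i ≤ j, f i j hij x = f i j hij y)
    [Module.Finite R0 Q] [Module.Projective R0 Q] {j : ι} {y : A j ⊗[R0] Q}
    (hy : (g j).toLinearMap.rTensor Q y = 0) :
    ∀ᶠ k in atTop, ∀ hjk : j ≤ k, (f j k hjk).toLinearMap.rTensor Q y = 0 := by
  obtain ⟨n, p, s, -, -, hps⟩ := Module.Finite.exists_comp_eq_id_of_projective R0 Q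
  have hsy : (g j).toLinearMap.rTensor _ (s.lTensor (A j) y) = 0 := by
    rw [LinearMap.rTensor_lTensor_apply, hy, map_zero]
  filter_upwards [eventually_rTensor_eq_zero_of_pi hf_comp hexact hsy] with k hk hjk
  rw [← LinearMap.id_apply (R := R0) ((f j k hjk).toLinearMap.rTensor Q y), ← LinearMap.lTensor_id,
    ← hps, LinearMap.lTensor_comp_apply, ← LinearMap.rTensor_lTensor_apply, hk hjk, map_zero]

theorem exists_rTensor_comp_eq [IsDirected ι (· ≤ ·)] [Nonempty ι]
    (hg : ∀ i j (hij : i ≤ j), (g j).comp (f i j hij) = g i)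
    (hsurj : ∀ x : R, ∃ i y, g i y = x) [Module.Finite R0 P] [Module.Projective R0 P]
    (l : P →ₗ[R0] R ⊗[R0] Q) :
    ∃ j, ∃ l' : P →ₗ[R0] A j ⊗[R0] Q, (g j).toLinearMap.rTensor Q ∘ₗ l' = l := by
  obtain ⟨n, p, s, -, -, hps⟩ := Module.Finite.exists_comp_eq_id_of_projective R0 P
  obtain ⟨j, hj⟩ := (eventually_all.2 fun a : Fin n =>
    eventually_mem_range_rTensor hg hsurj (Q := Q) (l (p (Pi.single a 1)))).exists
  choose w hw using hj
  have hfree : (g j).toLinearMap.rTensor Q ∘ₗ Fintype.linearCombination R0 w = l ∘ₗ p :=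
    (Pi.basisFun R0 (Fin n)).ext fun a => by simp [hw]
  exact ⟨j, Fintype.linearCombination R0 w ∘ₗ s, by
    rw [← LinearMap.comp_assoc, hfree, LinearMap.comp_assoc, hps, LinearMap.comp_id]⟩

theorem eventually_rTensor_comp_eq_zero
    (hf_comp : ∀ i j k (hij : i ≤ j) (hjk : j ≤ k),
      (f j k hjk).comp (f i j hij) = f i k (le_trans hij hjk))
    (hexact : ∀ i (x y : A i), g i x = g i y →
      ∃ j, ∃ hij : i ≤ j, f i j hij x = f i j hij y)
    [Module.Finite R0 P] [Module.Finite R0 Q] [Module.Projective R0 Q] {j : ι}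
    {l : P →ₗ[R0] A j ⊗[R0] Q} (hl : (g j).toLinearMap.rTensor Q ∘ₗ l = 0) :
    ∀ᶠ k in atTop, ∀ hjk : j ≤ k, (f j k hjk).toLinearMap.rTensor Q ∘ₗ l = 0 := by
  obtain ⟨S, hS⟩ := Module.Finite.fg_top (R := R0) (M := P)
  filter_upwards [(eventually_all_finset S).2 fun p _ =>
    eventually_rTensor_eq_zero hf_comp hexact (LinearMap.congr_fun hl p)] with k hk hjk
  exact LinearMap.ext_on hS fun p hp => hk p hp hjk

theorem exists_hom_lift [IsDirected ι (· ≤ ·)] [Nonempty ι]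
    (hg : ∀ i j (hij : i ≤ j), (g j).comp (f i j hij) = g i)
    (hsurj : ∀ x : R, ∃ i y, g i y = x) [Module.Finite R0 P] [Module.Projective R0 P]
    (χ : R ⊗[R0] P →ₗ[R] R ⊗[R0] Q) :
    ∃ (j : ι) (φ : A j ⊗[R0] P →ₗ[A j] A j ⊗[R0] Q),
      ∀ x, χ ((g j).toLinearMap.rTensor P x) = (g j).toLinearMap.rTensor Q (φ x) := by
  obtain ⟨j, l, hl⟩ := exists_rTensor_comp_eq hg hsurj (χ.restrictScalars R0 ∘ₗ mk R0 R P 1)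
  refine ⟨j, l.liftBaseChange (A j), AlgHom.map_rTensor_eq_of_tmul_one _ fun p => ?_⟩
  simpa using (LinearMap.congr_fun hl p).symm

theorem exists_le_forall_rTensor_eq [IsDirected ι (· ≤ ·)]
    (hf_comp : ∀ i j k (hij : i ≤ j) (hjk : j ≤ k),
      (f j k hjk).comp (f i j hij) = f i k (le_trans hij hjk))
    (hexact : ∀ i (x y : A i), g i x = g i y →
      ∃ j, ∃ hij : i ≤ j, f i j hij x = f i j hij y)
    [Module.Finite R0 P] [Module.Finite R0 Q] [Module.Projective R0 Q] {j : ι}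
    {φ ψ : A j ⊗[R0] P →ₗ[A j] A j ⊗[R0] Q}
    (h : ∀ x, (g j).toLinearMap.rTensor Q (φ x) = (g j).toLinearMap.rTensor Q (ψ x)) :
    ∃ k, ∃ hjk : j ≤ k, ∀ x,
      (f j k hjk).toLinearMap.rTensor Q (φ x) = (f j k hjk).toLinearMap.rTensor Q (ψ x) := by
  have : Nonempty ι := ⟨j⟩
  let l := (φ - ψ).restrictScalars R0 ∘ₗ mk R0 (A j) P 1
  have hl : (g j).toLinearMap.rTensor Q ∘ₗ l = 0 := by
    ext p
    simp [l, h]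
  obtain ⟨k, hk, hjk⟩ :=
    ((eventually_rTensor_comp_eq_zero hf_comp hexact hl).and (eventually_ge_atTop j)).exists
  refine ⟨k, hjk, fun x => ?_⟩
  have := AlgHom.map_rTensor_eq_of_tmul_one (f j k hjk) (χ := 0) (φ := φ - ψ)
    (fun p => (LinearMap.congr_fun (hk hjk) p).symm) x
  rwa [LinearMap.zero_apply, eq_comm, LinearMap.sub_apply, map_sub, sub_eq_zero] at this

theorem exists_baseChange_equiv [IsDirected ι (· ≤ ·)] [Nonempty ι]
    (hf_comp : ∀ i j k (hij : i ≤ j) (hjk : j ≤ k),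
      (f j k hjk).comp (f i j hij) = f i k (le_trans hij hjk))
    (hg : ∀ i j (hij : i ≤ j), (g j).comp (f i j hij) = g i)
    (hsurj : ∀ x : R, ∃ i y, g i y = x)
    (hexact : ∀ i (x y : A i), g i x = g i y →
      ∃ j, ∃ hij : i ≤ j, f i j hij x = f i j hij y)
    (M : Type*) [AddCommGroup M] [Module R M] [Module.Finite R M] [Module.Projective R M] :
    ∃ (j : ι) (Mj : Type u) (_ : AddCommGroup Mj) (_ : Module (A j) Mj),
      Module.Finite (A j) Mj ∧ Module.Projective (A j) Mj ∧
      (letI : Algebra (A j) R := (g j).toRingHom.toAlgebra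
       Nonempty ((R ⊗[A j] Mj) ≃ₗ[R] M)) := by
  obtain ⟨n, p, s, -, -, hps⟩ := Module.Finite.exists_comp_eq_id_of_projective R M
  let π := piScalarRight R0 R R (Fin n)
  let i := π.symm.toLinearMap ∘ₗ s
  let r := p ∘ₗ π.toLinearMap
  have hri (m : M) : r (i m) = m := by simpa [i, r] using LinearMap.congr_fun hps m
  obtain ⟨j, φ, hφ⟩ := exists_hom_lift hg hsurj (P := Fin n → R0) (i ∘ₗ r)
  have hφφ (x : A j ⊗[R0] (Fin n → R0)) :
      (g j).toLinearMap.rTensor _ ((φ ∘ₗ φ) x) = (g j).toLinearMap.rTensor _ (φ x) := by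
    simp only [LinearMap.comp_apply, ← hφ, hri]
  obtain ⟨k, hjk, hk⟩ := exists_le_forall_rTensor_eq hf_comp hexact hφφ
  let E : Module.End (A k) (A k ⊗[R0] (Fin n → R0)) :=
    ((f j k hjk).toLinearMap.rTensor _ ∘ₗ φ.restrictScalars R0 ∘ₗ mk R0 (A j) _ 1).liftBaseChange
      (A k)
  have hE : ∀ x,
      E ((f j k hjk).toLinearMap.rTensor _ x) = (f j k hjk).toLinearMap.rTensor _ (φ x) :=
    AlgHom.map_rTensor_eq_of_tmul_one _ fun v => by simp [E]
  have hEE : IsIdempotentElem E := by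
    refine AlgebraTensorModule.curry_injective (LinearMap.ext_ring (LinearMap.ext fun v => ?_))
    change E (E (1 ⊗ₜ v)) = E (1 ⊗ₜ v)
    rw [← AlgHom.rTensor_one_tmul (f j k hjk), hE, hE]
    exact hk _
  have hlift (x : A k ⊗[R0] (Fin n → R0)) :
      i (r ((g k).toLinearMap.rTensor _ x)) = (g k).toLinearMap.rTensor _ (E x) := by
    refine AlgHom.map_rTensor_eq_of_tmul_one (g k) (χ := i ∘ₗ r) (fun v => ?_) x
    rw [← AlgHom.rTensor_one_tmul (g j), hφ, ← rTensor_cocone_rTensor_transition hg hjk, ← hE,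
      AlgHom.rTensor_one_tmul]
  have hproj := LinearMap.IsIdempotentElem.isProj_range E hEE
  exact ⟨k, LinearMap.range E, inferInstance, inferInstance, inferInstance,
    .of_split (LinearMap.range E).subtype hproj.codRestrict
      (LinearMap.ext hproj.codRestrict_apply_cod),
    AlgHom.nonempty_baseChange_range_equiv (g k) hEE hri hlift⟩

end FilteredColimit

-- `R0` is the `A_i` of the hom statement, and `R` is the colimit `A`.
theorem statement14_general
    {ι : Type u} [Preorder ι] [IsDirected ι (· ≤ ·)] [Nonempty ι]
    (R0 : Type u) [CommRing R0]
    (A : ι → Type u) [∀ i, CommRing (A i)] [∀ i, Algebra R0 (A i)]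
    (f : ∀ i j, i ≤ j → A i →ₐ[R0] A j)
    (hf_comp : ∀ i j k (hij : i ≤ j) (hjk : j ≤ k),
      (f j k hjk).comp (f i j hij) = f i k (le_trans hij hjk))
    (R : Type u) [CommRing R] [Algebra R0 R]
    (g : ∀ i, A i →ₐ[R0] R)
    (hg : ∀ i j (hij : i ≤ j), (g j).comp (f i j hij) = g i)
    (hsurj : ∀ x : R, ∃ i y, g i y = x)
    (hexact : ∀ i (x y : A i), g i x = g i y →
      ∃ j, ∃ hij : i ≤ j, f i j hij x = f i j hij y)
    (P : Type u) [AddCommGroup P] [Module R0 P]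
    (Q : Type u) [AddCommGroup Q] [Module R0 Q]
    (hPfin : Module.Finite R0 P) (hPproj : Module.Projective R0 P)
    (hQfin : Module.Finite R0 Q) (hQproj : Module.Projective R0 Q) :
    -- essential surjectivity
    ((∀ (M : Type u) (_ : AddCommGroup M) (_ : Module R M),
        Module.Finite R M → Module.Projective R M →
        ∃ (j : ι) (Mj : Type u) (_ : AddCommGroup Mj) (_ : Module (A j) Mj),
          Module.Finite (A j) Mj ∧ Module.Projective (A j) Mj ∧
          (letI : Algebra (A j) R := (g j).toRingHom.toAlgebra
           Nonempty ((R ⊗[A j] Mj) ≃ₗ[R] M)))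
    -- surjectivity of the natural map on hom-sets
    ∧ (∀ χ : (R ⊗[R0] P) →ₗ[R] (R ⊗[R0] Q),
        ∃ (j : ι) (φ : ((A j) ⊗[R0] P) →ₗ[A j] ((A j) ⊗[R0] Q)),
          ∀ x, χ (TensorProduct.map (g j).toLinearMap LinearMap.id x) =
            TensorProduct.map (g j).toLinearMap LinearMap.id (φ x))
    -- injectivity of the natural map on hom-sets
    ∧ (∀ (j : ι) (φ ψ : ((A j) ⊗[R0] P) →ₗ[A j] ((A j) ⊗[R0] Q)),
        (∀ x, TensorProduct.map (g j).toLinearMap LinearMap.id (φ x) =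
          TensorProduct.map (g j).toLinearMap LinearMap.id (ψ x)) →
        ∃ (k : ι) (hjk : j ≤ k),
          ∀ x, TensorProduct.map (f j k hjk).toLinearMap LinearMap.id (φ x) =
            TensorProduct.map (f j k hjk).toLinearMap LinearMap.id (ψ x))) :=
  ⟨fun M _ _ _ _ => FilteredColimit.exists_baseChange_equiv hf_comp hg hsurj hexact M,
    fun χ => FilteredColimit.exists_hom_lift hg hsurj χ,
    fun _ _ _ h => FilteredColimit.exists_le_forall_rTensor_eq hf_comp hexact h⟩

theorem statement14
    {ι : Type u} [Preorder ι] [IsDirected ι (· ≤ ·)] [Nonempty ι]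
    (R0 : Type u) [CommRing R0]
    (A : ι → Type u) [∀ i, CommRing (A i)] [∀ i, Algebra R0 (A i)]
    (f : ∀ i j, i ≤ j → A i →ₐ[R0] A j)
    (hf_id : ∀ i, f i i le_rfl = AlgHom.id R0 (A i))
    (hf_comp : ∀ i j k (hij : i ≤ j) (hjk : j ≤ k),
      (f j k hjk).comp (f i j hij) = f i k (le_trans hij hjk))
    (R : Type u) [CommRing R] [Algebra R0 R]
    (g : ∀ i, A i →ₐ[R0] R)
    (hg : ∀ i j (hij : i ≤ j), (g j).comp (f i j hij) = g i)
    (hsurj : ∀ x : R, ∃ i y, g i y = x)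
    (hexact : ∀ i (x y : A i), g i x = g i y →
      ∃ j, ∃ hij : i ≤ j, f i j hij x = f i j hij y)
    (P : Type u) [AddCommGroup P] [Module R0 P]
    (Q : Type u) [AddCommGroup Q] [Module R0 Q]
    (hPfin : Module.Finite R0 P) (hPproj : Module.Projective R0 P)
    (hQfin : Module.Finite R0 Q) (hQproj : Module.Projective R0 Q) :
    -- essential surjectivity
    ((∀ (M : Type u) (_ : AddCommGroup M) (_ : Module R M),
        Module.Finite R M → Module.Projective R M →
        ∃ (j : ι) (Mj : Type u) (_ : AddCommGroup Mj) (_ : Module (A j) Mj),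
          Module.Finite (A j) Mj ∧ Module.Projective (A j) Mj ∧
          (letI : Algebra (A j) R := (g j).toRingHom.toAlgebra
           Nonempty ((R ⊗[A j] Mj) ≃ₗ[R] M)))
    -- surjectivity of the natural map on hom-sets
    ∧ (∀ χ : (R ⊗[R0] P) →ₗ[R] (R ⊗[R0] Q),
        ∃ (j : ι) (φ : ((A j) ⊗[R0] P) →ₗ[A j] ((A j) ⊗[R0] Q)),
          ∀ x, χ (TensorProduct.map (g j).toLinearMap LinearMap.id x) =
            TensorProduct.map (g j).toLinearMap LinearMap.id (φ x))
    -- injectivity of the natural map on hom-sets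
    ∧ (∀ (j : ι) (φ ψ : ((A j) ⊗[R0] P) →ₗ[A j] ((A j) ⊗[R0] Q)),
        (∀ x, TensorProduct.map (g j).toLinearMap LinearMap.id (φ x) =
          TensorProduct.map (g j).toLinearMap LinearMap.id (ψ x)) →
        ∃ (k : ι) (hjk : j ≤ k),
          ∀ x, TensorProduct.map (f j k hjk).toLinearMap LinearMap.id (φ x) =
            TensorProduct.map (f j k hjk).toLinearMap LinearMap.id (ψ x))) :=
  statement14_general R0 A f hf_comp R g hg hsurj hexact P Q hPfin hPproj hQfin hQproj
end
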